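/- For each k ≥ 4 there exists a constant c_k > 0 such that for all sufficiently large N, there is a Sidon system of k-element subsets of {1,…,N} of cardinality at least c_k · N^{k-1}. -/

import Mathlib

/-!
Fix a scale `L ≥ 1` and, for `x : Fin k → ℕ` with all `x i < L`, put
`A_x = {2L·2^i + x i | i < k} ⊆ [1, 2^(k+1) L]`. Read in base `2L`, an element of `A_x + A_y`
has high digit `2^i + 2^j`, which determines `{i, j}` since the powers of two form a Sidon set,
and low digit `x i + y j`. Hence `A_x + A_y = A_z + A_w` forces
`x i + y j ∈ {z i + w j, z j + w i}` for all `i, j`, and once the translation freedom is removed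
by `x 0 = 0` these relations give `{x, y} = {z, w}`. The `L^(k-1)` normalised `x` then give a
Sidon system, and `L ≈ N / 2^(k+1)` yields `≫ N^(k-1)` sets.
-/

open Finset Pointwise

def IsSidonSystem {α : Type*} [DecidableEq α] [Add α] (𝒜 : Finset (Finset α)) : Prop :=
  ∀ A ∈ 𝒜, ∀ B ∈ 𝒜, ∀ U ∈ 𝒜, ∀ V ∈ 𝒜, A + B = U + V → ({A, B} : Finset (Finset α)) = {U, V}

namespace Nat

theorem eq_and_eq_of_mul_add_eq_mul_add {M a b c d : ℕ} (hc : c < M) (hd : d < M)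
    (h : M * a + c = M * b + d) : a = b ∧ c = d := by
  have hM : 0 < M := by omega
  have hdiv := congrArg (· / M) h
  have hmod := congrArg (· % M) h
  simp only [Nat.mul_add_div hM, Nat.div_eq_of_lt hc, Nat.div_eq_of_lt hd, Nat.mul_add_mod,
    Nat.mod_eq_of_lt hc, Nat.mod_eq_of_lt hd, add_zero] at hdiv hmod
  exact ⟨hdiv, hmod⟩

theorem two_pow_add_two_pow_le_two_pow {i j q : ℕ} (hij : i ≤ j) (hjq : j < q) :
    2 ^ i + 2 ^ j ≤ 2 ^ q :=
  calc 2 ^ i + 2 ^ j ≤ 2 ^ j + 2 ^ j := Nat.add_le_add_right (Nat.pow_le_pow_right two_pos hij) _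
    _ = 2 ^ (j + 1) := by rw [pow_succ]; ring
    _ ≤ 2 ^ q := Nat.pow_le_pow_right two_pos hjq

theorem eq_and_eq_or_eq_and_eq_of_two_pow_add_two_pow_eq {i j p q : ℕ}
    (h : 2 ^ i + 2 ^ j = 2 ^ p + 2 ^ q) : (i = p ∧ j = q) ∨ (i = q ∧ j = p) := by
  wlog hij : i ≤ j generalizing i j
  · have := this (i := j) (j := i) (by rwa [add_comm]) (by omega); tauto
  wlog hpq : p ≤ q generalizing p q
  · have := this (p := q) (q := p) (by rwa [add_comm (2 ^ q)]) (by omega); tauto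
  have hjq : j = q := by
    have := Nat.two_pow_pos i
    have := Nat.two_pow_pos p
    rcases lt_trichotomy j q with hlt | heq | hlt
    · have := two_pow_add_two_pow_le_two_pow hij hlt; omega
    · exact heq
    · have := two_pow_add_two_pow_le_two_pow hpq hlt; omega
  subst hjq
  exact Or.inl ⟨Nat.pow_right_injective le_rfl (show 2 ^ i = 2 ^ p by omega), rfl⟩

theorem div_two_mul_le_cast_div {N B : ℕ} (hB : 0 < B) (hBN : B ≤ N) :
    (N : ℝ) / (2 * B) ≤ (N / B : ℕ) := by
  have hlt : N < N / B * B + B := Nat.lt_div_mul_add hB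
  have hq : B ≤ N / B * B := by
    have := (Nat.one_le_div_iff hB).2 hBN
    nlinarith
  rw [div_le_iff₀ (by positivity)]
  exact_mod_cast (by nlinarith : N ≤ N / B * (2 * B))

end Nat

theorem eq_and_eq_or_eq_and_eq_of_add_eq_or_add_eq {ι G : Type*} [AddCancelCommMonoid G]
    {x y z w : ι → G} {i₀ : ι} (hz : z i₀ = y i₀) (hw : w i₀ = y i₀)
    (h : ∀ i j, x i + y j = z i + w j ∨ x i + y j = z j + w i) :
    (x = z ∧ y = w) ∨ (x = w ∧ y = z) := by
  have hcoord : ∀ i, (x i = z i ∧ y i = w i) ∨ (x i = w i ∧ y i = z i) := by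
    intro i
    have hdiag : x i + y i = z i + w i := (h i i).elim id id
    rcases h i i₀ with hi | hi
    · rw [hw, add_left_inj] at hi
      exact Or.inl ⟨hi, by rwa [hi, add_right_inj] at hdiag⟩
    · rw [hz, add_comm (y i₀), add_left_inj] at hi
      exact Or.inr ⟨hi, by rwa [hi, add_comm, add_left_inj] at hdiag⟩
  by_cases hall : ∀ i, x i = z i ∧ y i = w i
  · exact Or.inl ⟨funext fun i => (hall i).1, funext fun i => (hall i).2⟩
  obtain ⟨j, hj⟩ := not_forall.1 hall
  have hj' := (hcoord j).resolve_left hj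
  have hflip : ∀ i, x i = z i → y i = w i → x i = y i := by
    intro i hxz hyw
    by_contra hxy
    rcases h i j with hij | hij
    · rw [hxz, add_right_inj] at hij
      exact hj ⟨hj'.1.trans (hij.symm.trans hj'.2), hij⟩
    · rw [← hj'.2, add_comm (y j), add_left_inj] at hij
      exact hxy (hij.trans hyw.symm)
  have hswap : ∀ i, x i = w i ∧ y i = z i := fun i =>
    (hcoord i).elim
      (fun ⟨hxz, hyw⟩ => ⟨(hflip i hxz hyw).trans hyw, (hflip i hxz hyw).symm.trans hxz⟩) id
  exact Or.inr ⟨funext fun i => (hswap i).1, funext fun i => (hswap i).2⟩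

section Blocks

variable {k : ℕ}

def blockElem (L : ℕ) (x : Fin k → ℕ) (i : Fin k) : ℕ := 2 * L * 2 ^ (i : ℕ) + x i

def blockSet (L : ℕ) (x : Fin k → ℕ) : Finset ℤ := univ.image fun i => (blockElem L x i : ℤ)

theorem blockElem_add_blockElem_eq {L : ℕ} {x y z w : Fin k → ℕ} (hx : ∀ i, x i < L)
    (hy : ∀ i, y i < L) (hz : ∀ i, z i < L) (hw : ∀ i, w i < L) {i j p q : Fin k}
    (h : blockElem L x i + blockElem L y j = blockElem L z p + blockElem L w q) :
    ((i = p ∧ j = q) ∨ (i = q ∧ j = p)) ∧ x i + y j = z p + w q := by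
  have hsplit : 2 * L * (2 ^ (i : ℕ) + 2 ^ (j : ℕ)) + (x i + y j)
      = 2 * L * (2 ^ (p : ℕ) + 2 ^ (q : ℕ)) + (z p + w q) := by
    unfold blockElem at h; linarith
  obtain ⟨hpow, hoff⟩ := Nat.eq_and_eq_of_mul_add_eq_mul_add
    (by linarith [hx i, hy j]) (by linarith [hz p, hw q]) hsplit
  refine ⟨?_, hoff⟩
  simpa only [Fin.val_inj] using Nat.eq_and_eq_or_eq_and_eq_of_two_pow_add_two_pow_eq hpow

theorem add_eq_or_add_eq_of_blockSet_add_blockSet_eq {L : ℕ} {x y z w : Fin k → ℕ}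
    (hx : ∀ i, x i < L) (hy : ∀ i, y i < L) (hz : ∀ i, z i < L) (hw : ∀ i, w i < L)
    (h : blockSet L x + blockSet L y = blockSet L z + blockSet L w) (i j : Fin k) :
    x i + y j = z i + w j ∨ x i + y j = z j + w i := by
  have hmem : (blockElem L x i + blockElem L y j : ℤ) ∈ blockSet L z + blockSet L w :=
    h ▸ add_mem_add (mem_image_of_mem _ (mem_univ i)) (mem_image_of_mem _ (mem_univ j))
  obtain ⟨_, hp, _, hq, hpq⟩ := mem_add.1 hmem
  obtain ⟨p, -, rfl⟩ := mem_image.1 hp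
  obtain ⟨q, -, rfl⟩ := mem_image.1 hq
  obtain ⟨hidx, hoff⟩ := blockElem_add_blockElem_eq hx hy hz hw (by exact_mod_cast hpq.symm)
  rcases hidx with ⟨rfl, rfl⟩ | ⟨rfl, rfl⟩
  · exact Or.inl hoff
  · exact Or.inr hoff

theorem card_blockSet {L : ℕ} {x : Fin k → ℕ} (hx : ∀ i, x i < L) : (blockSet L x).card = k := by
  rw [blockSet, card_image_of_injective _ ?_, card_univ, Fintype.card_fin]
  intro i j hij
  have := Nat.eq_and_eq_of_mul_add_eq_mul_add (by linarith [hx i]) (by linarith [hx j])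
    (Nat.cast_injective hij : blockElem L x i = blockElem L x j)
  exact Fin.ext (Nat.pow_right_injective le_rfl this.1)

theorem blockSet_subset_Icc {L : ℕ} {x : Fin k → ℕ} (hx : ∀ i, x i < L) :
    blockSet L x ⊆ Icc 1 (L * 2 ^ (k + 1) : ℕ) := by
  intro t ht
  obtain ⟨i, -, rfl⟩ := mem_image.1 ht
  have hi : 2 ^ ((i : ℕ) + 1) ≤ 2 ^ k := Nat.pow_le_pow_right two_pos i.isLt
  have hxi := hx i
  have := Nat.two_pow_pos (i : ℕ)
  rw [pow_succ] at hi
  rw [mem_Icc, blockElem, pow_succ]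
  constructor <;> norm_cast <;> nlinarith

end Blocks

section PointedBlocks

variable {m L : ℕ}

/-- Pinning `x 0 = 0` removes translations: `blockSet L (x + c) = blockSet L x + c`, so without
it `A_x + A_(y + c) = A_(x + c) + A_y`. -/
def pointedBox (m L : ℕ) : Finset (Fin (m + 1) → ℕ) :=
  Fintype.piFinset (Fin.cons {0} fun _ => range L)

theorem card_pointedBox : (pointedBox m L).card = L ^ m := by
  simp [pointedBox, Fintype.card_piFinset, Fin.prod_univ_succ]

theorem mem_pointedBox (hL : 0 < L) {x : Fin (m + 1) → ℕ} :
    x ∈ pointedBox m L ↔ x 0 = 0 ∧ ∀ i, x i < L := by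
  rw [pointedBox, Fintype.mem_piFinset]
  constructor
  · intro hx
    have h0 : x 0 = 0 := by simpa using hx 0
    exact ⟨h0, Fin.cases (by rwa [h0]) fun i => by simpa using hx i.succ⟩
  · rintro ⟨h0, hx⟩
    exact Fin.cases (by simp [h0]) fun i => by simp [hx]

theorem eq_and_eq_or_eq_and_eq_of_blockSet_add_blockSet_eq (hL : 0 < L)
    {x y z w : Fin (m + 1) → ℕ} (hx : x ∈ pointedBox m L) (hy : y ∈ pointedBox m L)
    (hz : z ∈ pointedBox m L) (hw : w ∈ pointedBox m L)
    (h : blockSet L x + blockSet L y = blockSet L z + blockSet L w) :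
    (x = z ∧ y = w) ∨ (x = w ∧ y = z) := by
  obtain ⟨-, hx⟩ := (mem_pointedBox hL).1 hx
  obtain ⟨hy0, hy⟩ := (mem_pointedBox hL).1 hy
  obtain ⟨hz0, hz⟩ := (mem_pointedBox hL).1 hz
  obtain ⟨hw0, hw⟩ := (mem_pointedBox hL).1 hw
  exact eq_and_eq_or_eq_and_eq_of_add_eq_or_add_eq (hz0.trans hy0.symm) (hw0.trans hy0.symm)
    (add_eq_or_add_eq_of_blockSet_add_blockSet_eq hx hy hz hw h)

def blockFamily (m L : ℕ) : Finset (Finset ℤ) := (pointedBox m L).image (blockSet L)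

theorem isSidonSystem_blockFamily (hL : 0 < L) : IsSidonSystem (blockFamily m L) := by
  simp only [IsSidonSystem, blockFamily, forall_mem_image]
  intro x hx y hy z hz w hw h
  rcases eq_and_eq_or_eq_and_eq_of_blockSet_add_blockSet_eq hL hx hy hz hw h with
    ⟨rfl, rfl⟩ | ⟨rfl, rfl⟩
  · rfl
  · exact pair_comm _ _

theorem card_blockFamily (hL : 0 < L) : (blockFamily m L).card = L ^ m := by
  rw [blockFamily, card_image_of_injOn, card_pointedBox]
  intro x hx y hy hxy
  have := eq_and_eq_or_eq_and_eq_of_blockSet_add_blockSet_eq hL hx hx hy hy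
    (congrArg₂ (· + ·) hxy hxy)
  tauto

theorem subset_Icc_and_card_eq_of_mem_blockFamily (hL : 0 < L) {A : Finset ℤ}
    (hA : A ∈ blockFamily m L) : A ⊆ Icc 1 (L * 2 ^ (m + 2) : ℕ) ∧ A.card = m + 1 := by
  obtain ⟨x, hx, rfl⟩ := mem_image.1 hA
  have hx := ((mem_pointedBox hL).1 hx).2
  exact ⟨blockSet_subset_Icc hx, card_blockSet hx⟩

end PointedBlocks

theorem sidon_system_lower_bound (k : ℕ) (hk : 4 ≤ k) :
    ∃ c : ℝ, 0 < c ∧ ∃ N₀ : ℕ, ∀ N : ℕ, N₀ ≤ N →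
      ∃ 𝒜 : Finset (Finset ℤ),
        (∀ A ∈ 𝒜, A ⊆ Finset.Icc (1 : ℤ) N ∧ A.card = k) ∧
        (∀ A ∈ 𝒜, ∀ B ∈ 𝒜, ∀ U ∈ 𝒜, ∀ V ∈ 𝒜,
          A + B = U + V → ({A, B} : Finset (Finset ℤ)) = {U, V}) ∧
        c * (N : ℝ) ^ (k - 1) ≤ (𝒜.card : ℝ) := by
  obtain ⟨m, rfl⟩ : ∃ m, k = m + 1 := ⟨k - 1, by omega⟩
  set B := 2 ^ (m + 2)
  have hB0 : 0 < B := by positivity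
  refine ⟨(1 / (2 * B : ℝ)) ^ m, by positivity, B, fun N hN => ?_⟩
  have hL : 0 < N / B := Nat.div_pos hN hB0
  refine ⟨blockFamily m (N / B), fun A hA => ?_, isSidonSystem_blockFamily hL, ?_⟩
  · obtain ⟨hsub, hcard⟩ := subset_Icc_and_card_eq_of_mem_blockFamily hL hA
    refine ⟨hsub.trans (Icc_subset_Icc_right ?_), hcard⟩
    exact_mod_cast Nat.div_mul_le_self N B
  · rw [card_blockFamily hL, Nat.add_sub_cancel, Nat.cast_pow (N / B), ← mul_pow,
      one_div_mul_eq_div]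
    exact pow_le_pow_left₀ (by positivity) (Nat.div_two_mul_le_cast_div hB0 hN) m
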